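/- Let k ≥ 1, m ≥ 0, P a 2^{-m}-separated set of cardinality 2^{2m+1} in [0,1)², and Z a set satisfying: (i) #Z ≥ c·m·2^{2m}; (ii) each z ∈ Z has a unique p(z) ∈ P with dist_H(p(z),z)² < 2^{-2m-1}; (iii) dist_H(p(z),z)² ≍ 2^{-2m-k} for all z ∈ Z. Let μ and ν be the uniform probability measures on P and Z respectively. Then ⟨M_S(μ), ν⟩ ≥ c'·2^k for an absolute constant c' > 0. -/

import Mathlib

/-!
A dyadic rectangle containing `z` and its partner `p(z) ∈ P` carries `μ`-mass at least
`1 / #P = 2^{-2m-1}`; taking the infimum over such rectangles gives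
`M_S(μ)(z) ≥ 2^{-2m-1} / dist_H(p(z), z)² ≥ 2^{-2m-1} / (c₂ 2^{-2m-k}) = 2^{k-1} / c₂`.
Averaging this pointwise bound over the nonempty set `Z` gives the claim with `c' = 1 / (2 c₂)`.
-/

open MeasureTheory
open scoped ENNReal

/-- A dyadic interval `[k·2^n, (k+1)·2^n)`. -/
def IsDyadicInterval (I : Set ℝ) : Prop :=
  ∃ k n : ℤ, I = Set.Ico ((k : ℝ) * 2 ^ n) (((k : ℝ) + 1) * 2 ^ n)

/-- An axis-parallel dyadic rectangle in the plane. -/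
def IsDyadicRect (R : Set (ℝ × ℝ)) : Prop :=
  ∃ I J : Set ℝ, IsDyadicInterval I ∧ IsDyadicInterval J ∧ R = I ×ˢ J

/-- `dist_H(p,q)² = inf { |R| : R dyadic rectangle containing p and q }`. -/
noncomputable def distH2 (p q : ℝ × ℝ) : ℝ≥0∞ :=
  sInf {v | ∃ R : Set (ℝ × ℝ), IsDyadicRect R ∧ p ∈ R ∧ q ∈ R ∧ v = volume R}

/-- The dyadic strong maximal function of a measure. -/
noncomputable def MS (μ : Measure (ℝ × ℝ)) (p : ℝ × ℝ) : ℝ≥0∞ :=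
  ⨆ R ∈ {R : Set (ℝ × ℝ) | IsDyadicRect R ∧ p ∈ R}, μ R / volume R

def unitSq : Set (ℝ × ℝ) := Set.Ico (0 : ℝ) 1 ×ˢ Set.Ico (0 : ℝ) 1

theorem measure_div_volume_le_MS (μ : Measure (ℝ × ℝ)) {R : Set (ℝ × ℝ)} {z : ℝ × ℝ}
    (hR : IsDyadicRect R) (hz : z ∈ R) : μ R / volume R ≤ MS μ z :=
  le_biSup (f := fun R => μ R / volume R) ⟨hR, hz⟩

theorem measure_singleton_div_distH2_le_MS (μ : Measure (ℝ × ℝ)) (p z : ℝ × ℝ) :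
    μ {p} / distH2 p z ≤ MS μ z := by
  rw [distH2, div_eq_mul_inv, ENNReal.inv_sInf, ENNReal.mul_iSup]
  refine iSup_le fun v => ?_
  rw [ENNReal.mul_iSup]
  refine iSup_le fun ⟨R, hR, hpR, hzR, hv⟩ => ?_
  subst hv
  calc μ {p} * (volume R)⁻¹ ≤ μ R / volume R := by
        rw [div_eq_mul_inv]
        gcongr
        exact Set.singleton_subset_iff.mpr hpR
    _ ≤ MS μ z := measure_div_volume_le_MS μ hR hzR

theorem inv_card_le_smul_sum_dirac_singleton {α : Type*} [MeasurableSpace α]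
    [MeasurableSingletonClass α] {P : Finset α} {p : α} (hp : p ∈ P) :
    (P.card : ℝ≥0∞)⁻¹ ≤ ((P.card : ℝ≥0∞)⁻¹ • ∑ q ∈ P, Measure.dirac q) {p} := by
  rw [Measure.smul_apply, Measure.finsetSum_apply, smul_eq_mul]
  calc (P.card : ℝ≥0∞)⁻¹ = (P.card : ℝ≥0∞)⁻¹ * Measure.dirac p {p} := by simp
    _ ≤ _ := by
      gcongr
      exact Finset.single_le_sum (f := fun q => Measure.dirac q {p}) (fun _ _ => bot_le) hp

theorem le_lintegral_smul_sum_dirac {α : Type*} [MeasurableSpace α]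
    [MeasurableSingletonClass α] {Z : Finset α} (hZ : Z.Nonempty) {f : α → ℝ≥0∞} {a : ℝ≥0∞}
    (hf : ∀ z ∈ Z, a ≤ f z) :
    a ≤ ∫⁻ z, f z ∂((Z.card : ℝ≥0∞)⁻¹ • ∑ q ∈ Z, Measure.dirac q) := by
  rw [lintegral_smul_measure, lintegral_finsetSum_measure]
  simp_rw [lintegral_dirac]
  calc a = (Z.card : ℝ≥0∞)⁻¹ * ∑ _q ∈ Z, a := by
        rw [Finset.sum_const, nsmul_eq_mul, ← mul_assoc,
          ENNReal.inv_mul_cancel (by simpa using hZ.ne_empty) (ENNReal.natCast_ne_top _), one_mul]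
    _ ≤ (Z.card : ℝ≥0∞)⁻¹ * ∑ q ∈ Z, f q := by gcongr with q hq; exact hf q hq

theorem ofReal_mul_two_pow_eq_inv_div {C : ℝ} (hC : 0 < C) (k m : ℕ) :
    ENNReal.ofReal (1 / (2 * C)) * 2 ^ k =
      ((2 ^ (2 * m + 1) : ℕ) : ℝ≥0∞)⁻¹ /
        (ENNReal.ofReal C * (2 : ℝ≥0∞) ^ (-(2 * (m : ℤ)) - (k : ℤ))) := by
  have h2 : (2 : ℝ≥0∞) ≠ 0 := two_ne_zero
  have h2' : (2 : ℝ≥0∞) ≠ ∞ := ENNReal.ofNat_ne_top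
  have hhalf : ENNReal.ofReal (1 / (2 * C)) * ENNReal.ofReal C = 2 ^ (-1 : ℤ) := by
    rw [← ENNReal.ofReal_mul (by positivity), zpow_neg_one, ← ENNReal.ofReal_ofNat 2,
      ← ENNReal.ofReal_inv_of_pos two_pos]
    congr 1
    field_simp
  rw [ENNReal.eq_div_iff (mul_ne_zero (by simpa using hC) (ENNReal.zpow_pos h2 h2' _).ne')
    (ENNReal.mul_ne_top ENNReal.ofReal_ne_top (ENNReal.zpow_ne_top h2 h2' _))]
  calc ENNReal.ofReal C * 2 ^ (-(2 * (m : ℤ)) - (k : ℤ)) * (ENNReal.ofReal (1 / (2 * C)) * 2 ^ k)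
      = (ENNReal.ofReal (1 / (2 * C)) * ENNReal.ofReal C) *
          (2 ^ (k : ℤ) * 2 ^ (-(2 * (m : ℤ)) - (k : ℤ))) := by rw [zpow_natCast]; ring
    _ = 2 ^ (-((2 * m + 1 : ℕ) : ℤ)) := by
      rw [hhalf, ← ENNReal.zpow_add h2 h2', ← ENNReal.zpow_add h2 h2']
      congr 1
      push_cast
      ring
    _ = _ := by rw [ENNReal.zpow_neg, zpow_natCast, Nat.cast_pow, Nat.cast_ofNat]

theorem stmt10_general (c c₁ c₂ : ℝ) (hc : 0 < c) (hc₂ : 0 < c₂) :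
    ∃ c' > (0 : ℝ), ∀ (k m : ℕ), 1 ≤ k → 1 ≤ m →
      ∀ P Z : Finset (ℝ × ℝ),
        (↑P : Set (ℝ × ℝ)) ⊆ unitSq → (↑Z : Set (ℝ × ℝ)) ⊆ unitSq →
        P.card = 2 ^ (2 * m + 1) →
        (∀ p ∈ P, ∀ q ∈ P, p ≠ q → (2 : ℝ≥0∞) ^ (-(2 * (m : ℤ))) ≤ distH2 p q) →
        (c * m * 2 ^ (2 * m) ≤ (Z.card : ℝ)) →
        ∀ pz : ℝ × ℝ → ℝ × ℝ,
        (∀ z ∈ Z, pz z ∈ P ∧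
            distH2 (pz z) z < (2 : ℝ≥0∞) ^ (-(2 * (m : ℤ)) - 1) ∧
            (∀ p ∈ P, distH2 p z < (2 : ℝ≥0∞) ^ (-(2 * (m : ℤ)) - 1) → p = pz z) ∧
            ENNReal.ofReal c₁ * (2 : ℝ≥0∞) ^ (-(2 * (m : ℤ)) - (k : ℤ)) ≤ distH2 (pz z) z ∧
            distH2 (pz z) z ≤ ENNReal.ofReal c₂ * (2 : ℝ≥0∞) ^ (-(2 * (m : ℤ)) - (k : ℤ))) →
        ENNReal.ofReal c' * 2 ^ k ≤
          ∫⁻ z, MS (((P.card : ℝ≥0∞))⁻¹ • ∑ p ∈ P, Measure.dirac p) z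
            ∂(((Z.card : ℝ≥0∞))⁻¹ • ∑ q ∈ Z, Measure.dirac q) := by
  refine ⟨1 / (2 * c₂), by positivity, ?_⟩
  intro k m _ hm P Z _ _ hPcard _ hZcard pz hpz
  have hZ : Z.Nonempty := by
    have hm' : (0 : ℝ) < m := by exact_mod_cast hm
    rw [← Finset.card_pos, ← Nat.cast_pos (α := ℝ)]
    exact lt_of_lt_of_le (by positivity) hZcard
  refine le_lintegral_smul_sum_dirac hZ fun z hz => ?_
  obtain ⟨hpzP, -, -, -, hpz_le⟩ := hpz z hz
  calc ENNReal.ofReal (1 / (2 * c₂)) * 2 ^ k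
      = (P.card : ℝ≥0∞)⁻¹ / (ENNReal.ofReal c₂ * 2 ^ (-(2 * (m : ℤ)) - (k : ℤ))) := by
        rw [hPcard, ofReal_mul_two_pow_eq_inv_div hc₂]
    _ ≤ ((P.card : ℝ≥0∞)⁻¹ • ∑ p ∈ P, Measure.dirac p) {pz z} / distH2 (pz z) z :=
        ENNReal.div_le_div (inv_card_le_smul_sum_dirac_singleton hpzP) hpz_le
    _ ≤ _ := measure_singleton_div_distH2_le_MS _ _ _

/-- Lower bound `⟨M_S(μ), ν⟩ ≥ c'·2^k` for the uniform measures `μ`, `ν` on the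
sets `P` and `Z` of the construction.  Here `c, c₁, c₂` are the implicit constants in
the hypotheses (i) `#Z ≥ c·m·2^{2m}`, and (iii) `dist_H(p(z),z)² ≍ 2^{-2m-k}`,
and `c' > 0` depends only on them. -/
theorem stmt10 (c c₁ c₂ : ℝ) (hc : 0 < c) (hc₁ : 0 < c₁) (hc₂ : 0 < c₂) :
    ∃ c' > (0 : ℝ), ∀ (k m : ℕ), 1 ≤ k → 1 ≤ m →
      ∀ P Z : Finset (ℝ × ℝ),
        (↑P : Set (ℝ × ℝ)) ⊆ unitSq → (↑Z : Set (ℝ × ℝ)) ⊆ unitSq →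
        P.card = 2 ^ (2 * m + 1) →
        (∀ p ∈ P, ∀ q ∈ P, p ≠ q → (2 : ℝ≥0∞) ^ (-(2 * (m : ℤ))) ≤ distH2 p q) →
        (c * m * 2 ^ (2 * m) ≤ (Z.card : ℝ)) →
        ∀ pz : ℝ × ℝ → ℝ × ℝ,
        (∀ z ∈ Z, pz z ∈ P ∧
            distH2 (pz z) z < (2 : ℝ≥0∞) ^ (-(2 * (m : ℤ)) - 1) ∧
            (∀ p ∈ P, distH2 p z < (2 : ℝ≥0∞) ^ (-(2 * (m : ℤ)) - 1) → p = pz z) ∧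
            ENNReal.ofReal c₁ * (2 : ℝ≥0∞) ^ (-(2 * (m : ℤ)) - (k : ℤ)) ≤ distH2 (pz z) z ∧
            distH2 (pz z) z ≤ ENNReal.ofReal c₂ * (2 : ℝ≥0∞) ^ (-(2 * (m : ℤ)) - (k : ℤ))) →
        ENNReal.ofReal c' * 2 ^ k ≤
          ∫⁻ z, MS (((P.card : ℝ≥0∞))⁻¹ • ∑ p ∈ P, Measure.dirac p) z
            ∂(((Z.card : ℝ≥0∞))⁻¹ • ∑ q ∈ Z, Measure.dirac q) :=
  stmt10_general c c₁ c₂ hc hc₂
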